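/- arXiv:0808.3489 — 5 statements merged into one kernel-verified Lean document; each statement's English description precedes it below -/
import Mathlib

section
/- Let (a_m) and (c_m) be sequences of non-negative integers satisfying a_m = Σ_{d|m} d·c_d for all m ∈ ℕ. If (a_m) is periodic with period n, then c_m = 0 for all m > n. -/
/-! Since `a` has period `n`, `a (m * n) = a n`. For `m > n` the divisor sum defining
`a (m * n)` contains every term of the one defining `a n` together with the extra term
`m * c m`; all terms are non-negative, so `m * c m = 0`. -/

theorem apply_add_mul_eq_of_periodic {a : ℕ → ℕ} {n : ℕ}
    (hper : ∀ m : ℕ, 0 < m → a (m + n) = a m) {m : ℕ} (hm : 0 < m) (k : ℕ) :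
    a (m + k * n) = a m := by
  induction k with
  | zero => simp
  | succ k ih =>
    rw [Nat.succ_mul, ← Nat.add_assoc, hper _ (by omega), ih]

theorem Nat.insert_divisors_subset_divisors_mul {m n : ℕ} (hm : m ≠ 0) (hn : n ≠ 0) :
    insert m n.divisors ⊆ (m * n).divisors :=
  Finset.insert_subset (Nat.mem_divisors.mpr ⟨dvd_mul_right m n, mul_ne_zero hm hn⟩)
    (Nat.divisors_subset_of_dvd (mul_ne_zero hm hn) (dvd_mul_left n m))

theorem stmt_0 (a c : ℕ → ℕ) (n : ℕ) (hn : 0 < n)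
    (hac : ∀ m : ℕ, 0 < m → a m = ∑ d ∈ m.divisors, d * c d)
    (hper : ∀ m : ℕ, 0 < m → a (m + n) = a m) :
    ∀ m : ℕ, n < m → c m = 0 := by
  intro m hm
  have hm0 : 0 < m := hn.trans hm
  have hmn : a (m * n) = a n := by
    obtain ⟨k, rfl⟩ := Nat.exists_eq_add_of_lt hm0
    simpa [Nat.succ_mul, Nat.add_comm] using apply_add_mul_eq_of_periodic hper hn k
  have hm_notMem : m ∉ n.divisors := fun h => hm.not_ge (Nat.divisor_le h)
  have hle := Finset.sum_le_sum_of_subset (f := fun d => d * c d)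
    (Nat.insert_divisors_subset_divisors_mul hm0.ne' hn.ne')
  rw [Finset.sum_insert hm_notMem, ← hac _ (Nat.mul_pos hm0 hn), hmn, hac _ hn] at hle
  have hmc : m * c m = 0 := by omega
  simpa [hm0.ne'] using hmc
end

section
/- Let M be a nonsingular 2×2 complex matrix with D = det M, T = trace M, and let (p_m) satisfy p₀ = 0, p₁ = 1, p_{m+1} = T·p_m - D·p_{m-1}. Then for all m ≥ 1, det(M^m - 𝟙) = -p_{m+1} + D·p_{m-1} + D^m + 1. -/
/-! By Cayley–Hamilton, `M ^ 2 = T • M - D • 1`, and induction gives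
`M ^ m = p m • M - (D * p (m - 1)) • 1`. Taking traces,
`tr (M ^ m) = p (m + 1) - D * p (m - 1)`, and for a `2 × 2` matrix
`det (A - 1) = det A - tr A + 1`, with `det (M ^ m) = D ^ m`. -/

namespace Matrix

variable {R : Type*} [CommRing R]

theorem sq_fin_two_eq_trace_smul_sub_det_smul (A : Matrix (Fin 2) (Fin 2) R) :
    A ^ 2 = A.trace • A - A.det • (1 : Matrix (Fin 2) (Fin 2) R) := by
  ext i j
  fin_cases i <;> fin_cases j <;>
    simp [sq, mul_apply, trace_fin_two, det_fin_two] <;> ring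

theorem det_fin_two_sub_one (A : Matrix (Fin 2) (Fin 2) R) :
    (A - 1).det = A.det - A.trace + 1 := by
  simp only [det_fin_two, trace_fin_two, sub_apply, one_apply_eq, one_apply_ne, ne_eq,
    zero_ne_one, one_ne_zero, not_false_eq_true, sub_zero]
  ring

section LucasSequence

variable (A : Matrix (Fin 2) (Fin 2) R) (p : ℕ → R) (h0 : p 0 = 0) (h1 : p 1 = 1)
  (hrec : ∀ n, p (n + 2) = A.trace * p (n + 1) - A.det * p n)
include h0 h1 hrec

theorem pow_succ_fin_two_eq_of_lucas :
    ∀ n, A ^ (n + 1) = p (n + 1) • A - (A.det * p n) • (1 : Matrix (Fin 2) (Fin 2) R)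
  | 0 => by simp [h0, h1]
  | n + 1 => by
    rw [pow_succ, pow_succ_fin_two_eq_of_lucas n, sub_mul, smul_mul_assoc, smul_mul_assoc,
      one_mul, ← sq, sq_fin_two_eq_trace_smul_sub_det_smul, hrec n]
    module

theorem trace_pow_succ_fin_two_eq_of_lucas (n : ℕ) :
    (A ^ (n + 1)).trace = p (n + 2) - A.det * p n := by
  rw [pow_succ_fin_two_eq_of_lucas A p h0 h1 hrec, hrec n]
  simp only [trace_sub, trace_smul, smul_eq_mul, trace_one, Fintype.card_fin, Nat.cast_ofNat]
  ring

end LucasSequence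

end Matrix

theorem stmt_6_general (M : Matrix (Fin 2) (Fin 2) ℂ)
    (p : ℕ → ℂ) (h0 : p 0 = 0) (h1 : p 1 = 1)
    (hrec : ∀ m : ℕ, 1 ≤ m → p (m + 1) = M.trace * p m - M.det * p (m - 1)) :
    ∀ m : ℕ, 1 ≤ m →
      (M ^ m - 1).det = -p (m + 1) + M.det * p (m - 1) + M.det ^ m + 1 := by
  have hrec' (n : ℕ) : p (n + 2) = M.trace * p (n + 1) - M.det * p n :=
    hrec (n + 1) n.succ_pos
  rintro m hm
  obtain ⟨n, rfl⟩ : ∃ n, m = n + 1 := ⟨m - 1, by omega⟩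
  rw [Matrix.det_fin_two_sub_one, Matrix.det_pow,
    Matrix.trace_pow_succ_fin_two_eq_of_lucas M p h0 h1 hrec' n, Nat.add_sub_cancel]
  ring

theorem stmt_6 (M : Matrix (Fin 2) (Fin 2) ℂ) (hD : M.det ≠ 0)
    (p : ℕ → ℂ) (h0 : p 0 = 0) (h1 : p 1 = 1)
    (hrec : ∀ m : ℕ, 1 ≤ m → p (m + 1) = M.trace * p m - M.det * p (m - 1)) :
    ∀ m : ℕ, 1 ≤ m →
      (M ^ m - 1).det = -p (m + 1) + M.det * p (m - 1) + M.det ^ m + 1 :=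
  stmt_6_general M p h0 h1 hrec
end

section
/- If M, M' ∈ Mat(2,ℤ) are conjugate by a matrix A ∈ GL(2,ℤ), i.e. M' = A M A^{-1}, then mgcd(M') = mgcd(M). -/
/-!
Modulo `n`, the divisibility `n ∣ mgcd M` says exactly that `M` reduces to a scalar matrix.
Scalar matrices are central, so this property is preserved by conjugation with any matrix
invertible over `ℤ`; hence `mgcd M ∣ mgcd (A * M * A⁻¹)`, and conjugating back gives the
reverse divisibility.
-/

def mgcd (M : Matrix (Fin 2) (Fin 2) ℤ) : ℕ :=
  Int.gcd (M 0 1) (Int.gcd (M 1 0) (M 1 1 - M 0 0))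

open Matrix

theorem dvd_mgcd_iff_exists_map_eq_scalar (n : ℕ) (M : Matrix (Fin 2) (Fin 2) ℤ) :
    n ∣ mgcd M ↔ ∃ c : ZMod n, M.map (Int.castRingHom (ZMod n)) = scalar (Fin 2) c := by
  rw [mgcd, Int.dvd_gcd_iff, Int.natCast_dvd_natCast, Int.dvd_gcd_iff]
  simp only [← ZMod.intCast_zmod_eq_zero_iff_dvd, Int.cast_sub, sub_eq_zero, ← Matrix.ext_iff,
    Fin.forall_fin_two, map_apply, eq_intCast, scalar_apply, diagonal_apply_eq, ne_eq, zero_ne_one,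
    one_ne_zero, not_false_eq_true, diagonal_apply_ne, exists_eq_right_right']
  grind

theorem map_mul_mul_eq_scalar {m R S : Type*} [Fintype m] [DecidableEq m] [Semiring R]
    [CommSemiring S] (f : R →+* S) {M A B : Matrix m m R} {c : S} (hAB : A * B = 1)
    (hM : M.map f = scalar m c) : (A * M * B).map f = scalar m c := by
  have hAB' : A.map f * B.map f = 1 := by
    rw [← Matrix.map_mul, hAB, Matrix.map_one f f.map_zero f.map_one]
  rw [Matrix.map_mul, Matrix.map_mul, hM, ← (scalar_commute c (fun _ => Commute.all _ _) _).eq,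
    mul_assoc, hAB', mul_one]

theorem mgcd_dvd_mgcd_mul_mul {M A B : Matrix (Fin 2) (Fin 2) ℤ} (hAB : A * B = 1) :
    mgcd M ∣ mgcd (A * M * B) := by
  obtain ⟨c, hc⟩ := (dvd_mgcd_iff_exists_map_eq_scalar _ M).mp dvd_rfl
  exact (dvd_mgcd_iff_exists_map_eq_scalar _ _).mpr ⟨c, map_mul_mul_eq_scalar _ hAB hc⟩

theorem stmt_16 (M M' A : Matrix (Fin 2) (Fin 2) ℤ)
    (hA : A.det = 1 ∨ A.det = -1) (hconj : M' = A * M * A⁻¹) :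
    mgcd M' = mgcd M := by
  have hdet : IsUnit A.det := Int.isUnit_iff.mpr hA
  have hM : M = A⁻¹ * M' * A := by simp [hconj, Matrix.mul_assoc, hdet]
  apply Nat.dvd_antisymm
  · conv_rhs => rw [hM]
    exact mgcd_dvd_mgcd_mul_mul (Matrix.nonsing_inv_mul A hdet)
  · rw [hconj]
    exact mgcd_dvd_mgcd_mul_mul (Matrix.mul_nonsing_inv A hdet)
end

section
/- Let M = [[a,b],[c,d]] and M' = [[a',b'],[c',d']] be 2×2 integer matrices with det M = det M', trace M = trace M', and mgcd(M) = mgcd(M') = r ∈ ℕ (r ≥ 1). Then r divides d - d'. -/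
/-!
With `u = a - a'` and `v = d - a'`, equal traces give `v - u = d - a` and `u + v = d' - a'`, both
divisible by `r`, while equal determinants give `u * v = b * c - b' * c'`, divisible by `r ^ 2`.
Writing `u + v = r p` and `v - u = r q`, the product condition forces `4 ∣ p ^ 2 - q ^ 2`, so `p`
and `q` have the same parity and `u = r (p - q) / 2` is a multiple of `r`; finally `d - d' = -u`.
-/

lemma dvd_of_gcd_gcd_eq {x y z : ℤ} {r : ℕ} (h : Int.gcd x (Int.gcd y z) = r) :
    (r : ℤ) ∣ x ∧ (r : ℤ) ∣ y ∧ (r : ℤ) ∣ z := by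
  subst h
  exact ⟨Int.gcd_dvd_left _ _, (Int.gcd_dvd_right _ _).trans (Int.gcd_dvd_left _ _),
    (Int.gcd_dvd_right _ _).trans (Int.gcd_dvd_right _ _)⟩

lemma dvd_of_dvd_sub_of_dvd_add_of_sq_dvd_mul {r u v : ℤ} (hsub : r ∣ v - u) (hadd : r ∣ u + v)
    (hmul : r ^ 2 ∣ u * v) : r ∣ u := by
  rcases eq_or_ne r 0 with rfl | hr
  · simp only [zero_dvd_iff] at hsub hadd ⊢
    omega
  obtain ⟨p, hp⟩ := hadd
  obtain ⟨q, hq⟩ := hsub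
  obtain ⟨s, hs⟩ := hmul
  have hpq : p ^ 2 - q ^ 2 = 4 * s := by
    apply mul_left_cancel₀ (pow_ne_zero 2 hr)
    linear_combination (v - u + r * q) * hq - (u + v + r * p) * hp + 4 * hs
  have hprod : Even ((p + q) * (p - q)) := ⟨2 * s, by linear_combination hpq⟩
  have heven : Even (p - q) := by
    rcases Int.even_mul.mp hprod with h | h
    · rwa [Int.even_sub, ← Int.even_add]
    · exact h
  obtain ⟨j, hj⟩ := heven
  have h2u : 2 * u = 2 * (r * j) := by linear_combination hp - hq + r * hj
  exact ⟨j, mul_left_cancel₀ two_ne_zero h2u⟩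

theorem stmt_18_general (a b c d a' b' c' d' : ℤ) (r : ℕ)
    (hdet : a * d - b * c = a' * d' - b' * c')
    (htr : a + d = a' + d')
    (hm : Int.gcd b (Int.gcd c (d - a)) = r)
    (hm' : Int.gcd b' (Int.gcd c' (d' - a')) = r) :
    (r : ℤ) ∣ d - d' := by
  obtain ⟨hb, hc, hda⟩ := dvd_of_gcd_gcd_eq hm
  obtain ⟨hb', hc', hda'⟩ := dvd_of_gcd_gcd_eq hm'
  have hmul : (r : ℤ) ^ 2 ∣ (a - a') * (d - a') := by
    have hprod : (a - a') * (d - a') = b * c - b' * c' := by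
      linear_combination hdet - a' * htr
    rw [hprod, sq]
    exact dvd_sub (mul_dvd_mul hb hc) (mul_dvd_mul hb' hc')
  have hu : (r : ℤ) ∣ a - a' := dvd_of_dvd_sub_of_dvd_add_of_sq_dvd_mul
    (by rwa [show d - a' - (a - a') = d - a by ring])
    (by rwa [show a - a' + (d - a') = d' - a' by linear_combination htr]) hmul
  rw [show d - d' = -(a - a') by linear_combination htr]
  exact hu.neg_right

theorem stmt_18 (a b c d a' b' c' d' : ℤ) (r : ℕ) (hr : 1 ≤ r)
    (hdet : a * d - b * c = a' * d' - b' * c')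
    (htr : a + d = a' + d')
    (hm : Int.gcd b (Int.gcd c (d - a)) = r)
    (hm' : Int.gcd b' (Int.gcd c' (d' - a')) = r) :
    (r : ℤ) ∣ d - d' :=
  stmt_18_general a b c d a' b' c' d' r hdet htr hm hm'
end

section
/- Let M, M' ∈ Mat(2,ℤ) and n ≥ 2. If the reductions of M and M' mod n are conjugate by a unit of Mat(2, ℤ/nℤ), then det M ≡ det M' (mod n), trace M ≡ trace M' (mod n), and the matrix gcds r = mgcd(M), r' = mgcd(M') generate the same ideal in ℤ/nℤ, i.e. r·(ℤ/nℤ) = r'·(ℤ/nℤ). -/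
/-! Conjugation preserves determinant and trace. It also preserves the ideal generated by
`b`, `c` and `d - a`: this is the smallest ideal `I` modulo which `M` is scalar, i.e. such that
`M - c • 1` has all entries in `I` for some `c`, and `A (M - c • 1) A⁻¹ = A M A⁻¹ - c • 1`.
Over `ℤ` this ideal is generated by `mgcd M`, and forming it commutes with reduction mod `n`. -/

open Matrix

theorem Ideal.mul_mem_matrix_right {R n : Type*} [CommSemiring R] [Fintype n] [DecidableEq n]
    (I : Ideal R) {M : Matrix n n R} (hM : M ∈ I.matrix n) (N : Matrix n n R) :
    M * N ∈ I.matrix n := fun i j => by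
  rw [mul_apply]
  exact Ideal.sum_mem _ fun k _ => I.mul_mem_right _ (hM i k)

section

variable {R S : Type*} [CommRing R] [CommRing S]

def offScalarIdeal (M : Matrix (Fin 2) (Fin 2) R) : Ideal R :=
  Ideal.span {M 0 1, M 1 0, M 1 1 - M 0 0}

theorem offScalarIdeal_le_iff (M : Matrix (Fin 2) (Fin 2) R) (I : Ideal R) :
    offScalarIdeal M ≤ I ↔ ∃ c : R, M - c • 1 ∈ I.matrix (Fin 2) := by
  simp only [offScalarIdeal, Ideal.span_le, Set.insert_subset_iff, Set.singleton_subset_iff,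
    SetLike.mem_coe, Ideal.mem_matrix, Fin.forall_fin_two, Matrix.sub_apply, Matrix.smul_apply]
  constructor
  · rintro ⟨h01, h10, h11⟩
    exact ⟨M 0 0, by simpa using ⟨h01, h10, h11⟩⟩
  · rintro ⟨c, ⟨h00, h01⟩, h10, h11⟩
    refine ⟨by simpa using h01, by simpa using h10, ?_⟩
    simpa using I.sub_mem h11 h00

theorem offScalarIdeal_conj_le {M : Matrix (Fin 2) (Fin 2) R} (A B : Matrix (Fin 2) (Fin 2) R)
    (hAB : A * B = 1) : offScalarIdeal (A * M * B) ≤ offScalarIdeal M := by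
  obtain ⟨c, hc⟩ := (offScalarIdeal_le_iff M _).1 le_rfl
  refine (offScalarIdeal_le_iff _ _).2 ⟨c, ?_⟩
  have hconj : A * M * B - c • 1 = A * (M - c • 1) * B := by
    rw [Matrix.mul_sub, Matrix.sub_mul, Matrix.mul_smul, Matrix.mul_one, Matrix.smul_mul, hAB]
  rw [hconj]
  exact Ideal.mul_mem_matrix_right _ (Ideal.mul_mem_left _ A hc) B

theorem offScalarIdeal_conj {A B : Matrix (Fin 2) (Fin 2) R} (hAB : A * B = 1) (hBA : B * A = 1)
    (M : Matrix (Fin 2) (Fin 2) R) : offScalarIdeal (A * M * B) = offScalarIdeal M := by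
  refine le_antisymm (offScalarIdeal_conj_le A B hAB) ?_
  calc offScalarIdeal M = offScalarIdeal (B * (A * M * B) * A) := by
        simp only [Matrix.mul_assoc, hBA, Matrix.mul_one, ← Matrix.mul_assoc B, Matrix.one_mul]
    _ ≤ offScalarIdeal (A * M * B) := offScalarIdeal_conj_le B A hBA

theorem offScalarIdeal_map (f : R →+* S) (M : Matrix (Fin 2) (Fin 2) R) :
    offScalarIdeal (M.map f) = (offScalarIdeal M).map f := by
  simp [offScalarIdeal, Ideal.map_span, Set.image_insert_eq]

end

theorem offScalarIdeal_eq_span_mgcd (M : Matrix (Fin 2) (Fin 2) ℤ) :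
    offScalarIdeal M = Ideal.span {(mgcd M : ℤ)} := by
  rw [offScalarIdeal, mgcd, Int.coe_gcd, span_gcd, Int.coe_gcd, Ideal.span_insert,
    ← span_gcd, ← Ideal.span_insert]

theorem span_mgcd_eq_offScalarIdeal_map {S : Type*} [CommRing S] (M : Matrix (Fin 2) (Fin 2) ℤ) :
    Ideal.span {(mgcd M : S)} = offScalarIdeal (M.map (Int.cast : ℤ → S)) := by
  rw [show M.map (Int.cast : ℤ → S) = M.map (Int.castRingHom S) from rfl, offScalarIdeal_map,
    offScalarIdeal_eq_span_mgcd, Ideal.map_span, Set.image_singleton]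
  simp

theorem stmt_19_general (M M' : Matrix (Fin 2) (Fin 2) ℤ) (n : ℕ)
    (hconj : ∃ A : Matrix (Fin 2) (Fin 2) (ZMod n), IsUnit A ∧
      A * M.map (Int.cast : ℤ → ZMod n) = M'.map (Int.cast : ℤ → ZMod n) * A) :
    ((M.det : ZMod n) = (M'.det : ZMod n)) ∧
    ((M.trace : ZMod n) = (M'.trace : ZMod n)) ∧
    Ideal.span {((mgcd M : ZMod n))} = Ideal.span {((mgcd M' : ZMod n))} := by
  obtain ⟨_, ⟨U, rfl⟩, hcomm⟩ := hconj
  have hM' : M'.map (Int.cast : ℤ → ZMod n) = U.val * M.map Int.cast * U⁻¹.val := by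
    rw [hcomm, Matrix.mul_assoc, U.mul_inv, Matrix.mul_one]
  have hdet (N : Matrix (Fin 2) (Fin 2) ℤ) : (N.det : ZMod n) = (N.map Int.cast).det :=
    RingHom.map_det (Int.castRingHom (ZMod n)) N
  have htrace (N : Matrix (Fin 2) (Fin 2) ℤ) : (N.trace : ZMod n) = (N.map Int.cast).trace :=
    AddMonoidHom.map_trace (Int.castAddHom (ZMod n)) N
  refine ⟨?_, ?_, ?_⟩
  · rw [hdet, hdet, hM', det_units_conj]
  · rw [htrace, htrace, hM', trace_units_conj]
  · rw [span_mgcd_eq_offScalarIdeal_map, span_mgcd_eq_offScalarIdeal_map, hM',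
      offScalarIdeal_conj U.mul_inv U.inv_mul]

theorem stmt_19 (M M' : Matrix (Fin 2) (Fin 2) ℤ) (n : ℕ) (hn : 2 ≤ n)
    (hconj : ∃ A : Matrix (Fin 2) (Fin 2) (ZMod n), IsUnit A ∧
      A * M.map (Int.cast : ℤ → ZMod n) = M'.map (Int.cast : ℤ → ZMod n) * A) :
    ((M.det : ZMod n) = (M'.det : ZMod n)) ∧
    ((M.trace : ZMod n) = (M'.trace : ZMod n)) ∧
    Ideal.span {((mgcd M : ZMod n))} = Ideal.span {((mgcd M' : ZMod n))} :=
  stmt_19_general M M' n hconj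
end
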